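/- arXiv:1908.06745 — 9 statements merged into one kernel-verified Lean document; each statement's English description precedes it below -/
import Mathlib

section
/- A finite quandle (X,◁) is abelian if and only if it is 2-reductive, i.e. satisfies a◁(b◁c) = a◁b for all a,b,c ∈ X. -/
variable {X : Type*}

/-- Quandle axioms for a binary operation `op` (right-translation convention):
self-distributivity, bijectivity of right translations, idempotence. -/
structure IsQuandleOp (op : X → X → X) : Prop where
  sd : ∀ a b c, op (op a b) c = op (op a c) (op b c)
  bij : ∀ b, Function.Bijective fun a => op a b
  idem : ∀ a, op a a = a

/-- A quandle operation is abelian if `(a ◁ b) ◁ c = (a ◁ c) ◁ b`. -/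
def IsAbelianOp (op : X → X → X) : Prop :=
  ∀ a b c, op (op a b) c = op (op a c) b

/-- A finite quandle `(X, ◁)` is abelian if and only if it is
2-reductive, i.e. satisfies `a ◁ (b ◁ c) = a ◁ b` for all `a, b, c ∈ X`. -/
theorem abelian_iff_two_reductive {X : Type*} [Finite X] (op : X → X → X)
    (hq : IsQuandleOp op) :
    IsAbelianOp op ↔ ∀ a b c : X, op a (op b c) = op a b := by
  constructor
  · intro hab a b c
    obtain ⟨a', rfl⟩ := (hq.bij c).2 a
    show op (op a' c) (op b c) = op (op a' c) b
    rw [← hq.sd, hab]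
  · intro h2 a b c
    rw [hq.sd, h2]
end

section
/- The FP quandle operation a ◁ b := a + x_i(j−i) (for a in the component A_i and b in the component A_j) defines an abelian quandle structure on Q = ⊔_{i ∈ ℤ/r} A_i. Moreover, if each A_i is generated as a group by the set {x_i(k) : k ∈ ℤ/r}, then the orbits of this quandle are exactly the r components A_i. -/
/-!
Each right translation of the FP quandle only adds a constant to the coordinate in a fixed
component, so every axiom reduces to commutativity and associativity of addition in one
group `A i`, and idempotence to `x i 0 = 0`. Orbits never leave a component. Inside `A i`,
acting by an element of `A (i + k)` adds `x i k`; the differences `d` for which `v` and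
`v + d` always lie in one orbit form a subgroup, so it contains the subgroup generated by
the `x i k`, which is everything.
-/

variable {X : Type*}

/-- The smallest equivalence relation identifying `a` with `op a b`. -/
def orbitRel (op : X → X → X) : X → X → Prop :=
  Relation.EqvGen fun a b => ∃ c, op a c = b

/-- The setoid of orbits of a quandle. -/
def orbitSetoid (op : X → X → X) : Setoid X :=
  ⟨orbitRel op, Relation.EqvGen.is_equivalence _⟩

/-- The filtered-permutation (FP) quandle operation on `⊔_{i ∈ ℤ/r} A i`:
`a ◁ b = a + x i (j - i)` for `a ∈ A i`, `b ∈ A j`. -/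
def fpOp {r : ℕ} (A : ZMod r → Type*) [∀ i, AddCommGroup (A i)]
    (x : (i : ZMod r) → ZMod r → A i) :
    (Σ i, A i) → (Σ i, A i) → (Σ i, A i) :=
  fun a b => ⟨a.1, a.2 + x a.1 (b.1 - a.1)⟩

section Translations

variable {G : Type*} [AddGroup G]

theorem Setoid.rel_add_of_mem_closure (s : Setoid G) {S : Set G}
    (hS : ∀ g ∈ S, ∀ v, s v (v + g)) {d : G} (hd : d ∈ AddSubgroup.closure S) (v : G) :
    s v (v + d) := by
  induction hd using AddSubgroup.closure_induction generalizing v with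
  | mem g hg => exact hS g hg v
  | zero => rw [add_zero]
  | add d e _ _ hd he => simpa [add_assoc] using s.trans (hd v) (he (v + d))
  | neg d _ hd => simpa using s.symm (hd (v + -d))

theorem Setoid.rel_of_closure_eq_top (s : Setoid G) {S : Set G}
    (hS : ∀ g ∈ S, ∀ v, s v (v + g)) (htop : AddSubgroup.closure S = ⊤) (v w : G) :
    s v w :=
  add_neg_cancel_left v w ▸ s.rel_add_of_mem_closure hS (htop ▸ AddSubgroup.mem_top (-v + w)) v

end Translations

theorem orbitRel.eq_of_map_op_eq {Y : Type*} {op : X → X → X} (f : X → Y)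
    (hf : ∀ a c, f (op a c) = f a) {a b : X} (h : orbitRel op a b) : f a = f b :=
  Setoid.eqvGen_le (s := Setoid.ker f) (fun a _ ⟨c, hc⟩ => hc ▸ (hf a c).symm) h

section FP

variable {r : ℕ} {A : ZMod r → Type*} [∀ i, AddCommGroup (A i)] {x : (i : ZMod r) → ZMod r → A i}

theorem isAbelianOp_fpOp : IsAbelianOp (fpOp A x) := fun _ _ _ =>
  congrArg (Sigma.mk _) (add_right_comm _ _ _)

theorem isQuandleOp_fpOp (hx0 : ∀ i, x i 0 = 0) : IsQuandleOp (fpOp A x) where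
  sd _ _ _ := congrArg (Sigma.mk _) (add_right_comm _ _ _)
  bij b := Function.bijective_iff_has_inverse.mpr
    ⟨fun a => ⟨a.1, a.2 - x a.1 (b.1 - a.1)⟩,
      fun _ => congrArg (Sigma.mk _) (add_sub_cancel_right _ _),
      fun _ => congrArg (Sigma.mk _) (sub_add_cancel _ _)⟩
  idem _ := by simp [fpOp, hx0]

theorem orbitRel_fpOp_add (i : ZMod r) (v : A i) (k : ZMod r) :
    orbitRel (fpOp A x) ⟨i, v⟩ ⟨i, v + x i k⟩ :=
  .rel _ _ ⟨⟨i + k, 0⟩, by simp [fpOp]⟩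

theorem orbitRel_fpOp_iff (hgen : ∀ i, AddSubgroup.closure (Set.range (x i)) = ⊤)
    (a b : Σ i, A i) : orbitRel (fpOp A x) a b ↔ a.1 = b.1 := by
  refine ⟨orbitRel.eq_of_map_op_eq (op := fpOp A x) Sigma.fst fun _ _ => rfl, ?_⟩
  obtain ⟨i, v⟩ := a
  obtain ⟨j, w⟩ := b
  rintro (rfl : i = j)
  refine ((orbitSetoid (fpOp A x)).comap (Sigma.mk i)).rel_of_closure_eq_top ?_ (hgen i) v w
  rintro _ ⟨k, rfl⟩ u
  exact orbitRel_fpOp_add i u k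

end FP

theorem fpOp_isAbelianQuandle_and_orbits_general (r : ℕ)
    (A : ZMod r → Type*) [∀ i, AddCommGroup (A i)]
    (x : (i : ZMod r) → ZMod r → A i) (hx0 : ∀ i, x i 0 = 0) :
    (IsQuandleOp (fpOp A x) ∧ IsAbelianOp (fpOp A x)) ∧
      ((∀ i, AddSubgroup.closure (Set.range (x i)) = ⊤) →
        ∀ a b : Σ i, A i, orbitRel (fpOp A x) a b ↔ a.1 = b.1) :=
  ⟨⟨isQuandleOp_fpOp hx0, isAbelianOp_fpOp⟩, orbitRel_fpOp_iff⟩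

/-- The FP operation defines an abelian quandle structure on
`⊔_{i ∈ ℤ/r} A i`; if moreover each `A i` is generated by `{x i k : k ∈ ℤ/r}`,
then the orbits are exactly the `r` components. -/
theorem fpOp_isAbelianQuandle_and_orbits (r : ℕ) (hr : 1 ≤ r)
    (A : ZMod r → Type*) [∀ i, AddCommGroup (A i)]
    (x : (i : ZMod r) → ZMod r → A i) (hx0 : ∀ i, x i 0 = 0) :
    (IsQuandleOp (fpOp A x) ∧ IsAbelianOp (fpOp A x)) ∧
      ((∀ i, AddSubgroup.closure (Set.range (x i)) = ⊤) →
        ∀ a b : Σ i, A i, orbitRel (fpOp A x) a b ↔ a.1 = b.1) :=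
  fpOp_isAbelianQuandle_and_orbits_general r A x hx0
end

section
/- Every finite abelian quandle (X,◁) with r orbits is isomorphic, via a ◁-preserving bijection, to a filtered-permutation quandle on r components in which each A_i is a finite abelian group generated by the set {x_i(k) : k ∈ ℤ/r}. -/
variable {X : Type*}

/-!
In an abelian quandle the right translations `R_b = (· ◁ b)` commute, and self-distributivity
gives `R_(b ◁ c) = R_b`, so `R_b` only depends on the orbit of `b`. The group `G` generated by
the right translations is therefore abelian, its orbits are the quandle orbits, and
`a ◁ b = σ_j • a` where `σ_j` is the translation attached to the orbit `O_j` of `b`.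
Choosing a base point `p_i` in each orbit, orbit–stabiliser identifies `O_i` with the abelian
group `G ⧸ Stab(p_i)` via `g • p_i ↦ [g]`; since `σ_j • (g • p_i) = (g σ_j) • p_i`, in these
coordinates `◁` becomes the FP operation with `x_i(k) = [σ_(i+k)]`. Idempotence `p_i ◁ p_i = p_i` gives `x_i(0) = 0`, and the `x_i(k)`
generate because the `σ_j` generate `G`.
-/

theorem AddSubgroup.closure_range_comp_eq_top {ι M N : Type*} [AddGroup M] [AddGroup N]
    {f : M →+ N} (hf : Function.Surjective f) {v : ι → M}
    (hv : AddSubgroup.closure (Set.range v) = ⊤) :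
    AddSubgroup.closure (Set.range (f ∘ v)) = ⊤ := by
  rw [Set.range_comp, ← AddMonoidHom.map_closure, hv, AddSubgroup.map_top_of_surjective f hf]

theorem AddCommGrpCat.exists_addEquiv.{v, u} (M : Type u) [AddCommGroup M] [Small.{v} M] :
    ∃ B : AddCommGrpCat.{v}, Nonempty (M ≃+ B) :=
  ⟨.of (Shrink M), ⟨Shrink.addEquiv.symm⟩⟩

theorem fpOp_sigmaCongrRight {r : ℕ} {A B : ZMod r → Type*} [∀ i, AddCommGroup (A i)]
    [∀ i, AddCommGroup (B i)] (e : ∀ i, A i ≃+ B i) (x : (i : ZMod r) → ZMod r → A i)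
    (p q : Σ i, A i) :
    Equiv.sigmaCongrRight (fun i => (e i).toEquiv) (fpOp A x p q) =
      fpOp B (fun i k => e i (x i k)) (Equiv.sigmaCongrRight (fun i => (e i).toEquiv) p)
        (Equiv.sigmaCongrRight (fun i => (e i).toEquiv) q) := by
  obtain ⟨i, a⟩ := p
  exact Sigma.ext rfl (heq_of_eq (map_add (e i) _ _))

namespace MulAction

theorem orbitRel.Quotient.mk_smul_out {G : Type*} [Group G] [MulAction G X] (g : G)
    (ω : orbitRel.Quotient G X) : (Quotient.mk'' (g • ω.out) : orbitRel.Quotient G X) = ω :=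
  (Quotient.sound' (MulAction.mem_orbit _ g)).trans (Quotient.out_eq' ω)

section FPCoordinates

variable {G : Type*} [CommGroup G] [MulAction G X] {r : ℕ}
  (ι : orbitRel.Quotient G X ≃ ZMod r) (σ : orbitRel.Quotient G X → G)

abbrev fpComponent (i : ZMod r) : Type _ :=
  Additive (G ⧸ stabilizer G (ι.symm i).out)

noncomputable def fpGenerator (i k : ZMod r) : fpComponent ι i :=
  Additive.ofMul (σ (ι.symm (i + k)) : G ⧸ stabilizer G (ι.symm i).out)

noncomputable def fpCoords : X ≃ Σ i, fpComponent ι i :=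
  (selfEquivSigmaOrbitsQuotientStabilizer G X).trans <|
    (Equiv.sigmaCongrLeft' ι).trans (Equiv.sigmaCongrRight fun _ => Additive.ofMul)

theorem fpCoords_symm_mk (i : ZMod r) (g : G) :
    (fpCoords ι).symm ⟨i, Additive.ofMul (g : G ⧸ stabilizer G (ι.symm i).out)⟩ =
      g • (ι.symm i).out :=
  rfl

theorem fpComponent_exists_ofMul_mk {i : ZMod r} (c : fpComponent ι i) :
    ∃ g : G, Additive.ofMul (g : G ⧸ stabilizer G (ι.symm i).out) = c := by
  obtain ⟨g, hg⟩ := QuotientGroup.mk_surjective (Additive.toMul c)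
  exact ⟨g, congrArg Additive.ofMul hg⟩

theorem fpCoords_smul (a b : X) :
    fpCoords ι (σ (Quotient.mk'' b) • a) =
      fpOp (fpComponent ι) (fpGenerator ι σ) (fpCoords ι a) (fpCoords ι b) := by
  suffices ∀ p q, (fpCoords ι).symm (fpOp (fpComponent ι) (fpGenerator ι σ) p q) =
      σ (Quotient.mk'' ((fpCoords ι).symm q)) • (fpCoords ι).symm p by
    simpa using congrArg (fpCoords ι) (this (fpCoords ι a) (fpCoords ι b)).symm
  rintro ⟨i, c⟩ ⟨j, d⟩
  obtain ⟨g, rfl⟩ := fpComponent_exists_ofMul_mk ι c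
  obtain ⟨h, rfl⟩ := fpComponent_exists_ofMul_mk ι d
  change (fpCoords ι).symm ⟨i, Additive.ofMul (g * σ (ι.symm (i + (j - i))) : G ⧸ _)⟩ = _
  rw [fpCoords_symm_mk, fpCoords_symm_mk, fpCoords_symm_mk, orbitRel.Quotient.mk_smul_out,
    add_sub_cancel, mul_comm, mul_smul]

theorem fpGenerator_zero (hfix : ∀ a : X, σ (Quotient.mk'' a) • a = a) (i : ZMod r) :
    fpGenerator ι σ i 0 = 0 := by
  have h := hfix (ι.symm i).out
  rw [Quotient.mk''_eq_mk, Quotient.out_eq] at h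
  simpa [fpGenerator, QuotientGroup.eq_one_iff] using h

theorem closure_range_fpGenerator (hgen : Subgroup.closure (Set.range σ) = ⊤) (i : ZMod r) :
    AddSubgroup.closure (Set.range (fpGenerator ι σ i)) = ⊤ := by
  have hreindex : Function.Surjective fun k => ι.symm (i + k) :=
    ι.symm.surjective.comp (add_left_surjective i)
  have hgen' : AddSubgroup.closure (Set.range (Additive.ofMul ∘ σ)) = ⊤ := by
    rw [Set.range_comp, Equiv.image_eq_preimage_symm]
    change AddSubgroup.closure (Additive.toMul ⁻¹' _) = ⊤
    rw [← Subgroup.toAddSubgroup_closure, hgen]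
    rfl
  let φ : Additive G →+ fpComponent ι i :=
    (QuotientGroup.mk' (stabilizer G (ι.symm i).out)).toAdditive
  change AddSubgroup.closure (Set.range ((φ ∘ Additive.ofMul ∘ σ) ∘ fun k => ι.symm (i + k))) = ⊤
  rw [hreindex.range_comp]
  exact AddSubgroup.closure_range_comp_eq_top (f := φ) (fpComponent_exists_ofMul_mk ι) hgen'

end FPCoordinates

theorem exists_fpOp_equiv {G : Type*} [CommGroup G] [MulAction G X] [Finite G] [Finite X]
    {r : ℕ} [NeZero r] (hcard : Nat.card (orbitRel.Quotient G X) = r)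
    (σ : orbitRel.Quotient G X → G) (hfix : ∀ a : X, σ (Quotient.mk'' a) • a = a)
    (hgen : Subgroup.closure (Set.range σ) = ⊤) :
    ∃ (A : ZMod r → AddCommGrpCat.{0}) (x : (i : ZMod r) → ZMod r → A i),
      (∀ i, x i 0 = 0) ∧ (∀ i, Finite (A i)) ∧
      (∀ i, AddSubgroup.closure (Set.range (x i)) = ⊤) ∧
      ∃ f : X ≃ Σ i, (A i : Type),
        ∀ a b : X, f (σ (Quotient.mk'' b) • a) = fpOp (fun i => (A i : Type)) x (f a) (f b) := by
  obtain ⟨ι⟩ : Nonempty (orbitRel.Quotient G X ≃ ZMod r) :=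
    Finite.card_eq.mp (by rw [hcard, Nat.card_zmod])
  choose A hA using fun i => AddCommGrpCat.exists_addEquiv.{0} (fpComponent ι i)
  let e (i : ZMod r) : fpComponent ι i ≃+ A i := (hA i).some
  refine ⟨A, fun i k => e i (fpGenerator ι σ i k), fun i => ?_, fun i => ?_, fun i => ?_, ?_⟩
  · show e i (fpGenerator ι σ i 0) = 0
    rw [fpGenerator_zero ι σ hfix, map_zero]
  · exact Finite.of_equiv _ (e i).toEquiv
  · exact AddSubgroup.closure_range_comp_eq_top (f := (e i : fpComponent ι i →+ A i))
      (e i).surjective (closure_range_fpGenerator ι σ hgen i)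
  · refine ⟨(fpCoords ι).trans (Equiv.sigmaCongrRight fun i => (e i).toEquiv), fun a b => ?_⟩
    rw [Equiv.trans_apply, fpCoords_smul, fpOp_sigmaCongrRight]
    rfl

end MulAction

namespace IsQuandleOp

variable {op : X → X → X}

noncomputable def rightPerm (hq : IsQuandleOp op) (b : X) : Equiv.Perm X :=
  Equiv.ofBijective _ (hq.bij b)

theorem commute_rightPerm (hq : IsQuandleOp op) (hab : IsAbelianOp op) (b c : X) :
    Commute (hq.rightPerm b) (hq.rightPerm c) :=
  Equiv.ext fun a => hab a c b

theorem rightPerm_op (hq : IsQuandleOp op) (hab : IsAbelianOp op) (b c : X) :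
    hq.rightPerm (op b c) = hq.rightPerm b := by
  refine Equiv.ext fun a => ?_
  obtain ⟨d, rfl⟩ := (hq.bij c).2 a
  exact (hq.sd d b c).symm.trans (hab d b c)

theorem rightPerm_eq_of_orbitRel (hq : IsQuandleOp op) (hab : IsAbelianOp op) {b c : X}
    (h : orbitRel op b c) : hq.rightPerm b = hq.rightPerm c := by
  induction h with
  | rel b _ h => obtain ⟨d, rfl⟩ := h; exact (hq.rightPerm_op hab b d).symm
  | refl => rfl
  | symm _ _ _ ih => exact ih.symm
  | trans _ _ _ _ _ ih₁ ih₂ => exact ih₁.trans ih₂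

def innerGroup (hq : IsQuandleOp op) : Subgroup (Equiv.Perm X) :=
  Subgroup.closure (Set.range hq.rightPerm)

theorem isMulCommutative_innerGroup (hq : IsQuandleOp op) (hab : IsAbelianOp op) :
    IsMulCommutative hq.innerGroup :=
  Subgroup.isMulCommutative_closure <| by
    rintro _ ⟨b, rfl⟩ _ ⟨c, rfl⟩
    exact hq.commute_rightPerm hab b c

theorem orbitRel_iff_mem_orbit (hq : IsQuandleOp op) {a b : X} :
    orbitRel op a b ↔ a ∈ MulAction.orbit hq.innerGroup b := by
  constructor
  · refine fun h => (MulAction.orbitRel hq.innerGroup X).iseqv.eqvGen_iff.1 (h.mono ?_)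
    rintro a _ ⟨c, rfl⟩
    exact MulAction.mem_orbit_symm.1 ⟨⟨hq.rightPerm c, Subgroup.subset_closure ⟨c, rfl⟩⟩, rfl⟩
  · rintro ⟨⟨g, hg⟩, rfl⟩
    change orbitRel op (g b) b
    induction hg using Subgroup.closure_induction generalizing b with
    | mem _ h =>
      obtain ⟨c, rfl⟩ := h
      exact (Relation.EqvGen.rel _ _ ⟨c, rfl⟩).symm
    | one => exact Relation.EqvGen.refl b
    | mul g h _ _ ihg ihh => exact (ihg (b := h b)).trans _ _ _ ihh
    | inv g _ ih =>
      have h := ih (b := g⁻¹ b)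
      rw [Equiv.Perm.coe_inv, Equiv.apply_symm_apply] at h
      exact h.symm

theorem orbitSetoid_eq (hq : IsQuandleOp op) :
    orbitSetoid op = MulAction.orbitRel hq.innerGroup X :=
  Setoid.ext fun _ _ => hq.orbitRel_iff_mem_orbit

noncomputable def orbitTranslation (hq : IsQuandleOp op) (hab : IsAbelianOp op) :
    MulAction.orbitRel.Quotient hq.innerGroup X → hq.innerGroup :=
  Quotient.lift (fun b => ⟨hq.rightPerm b, Subgroup.subset_closure ⟨b, rfl⟩⟩) fun _ _ h =>
    Subtype.ext <| hq.rightPerm_eq_of_orbitRel hab (hq.orbitRel_iff_mem_orbit.2 h)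

theorem closure_range_orbitTranslation (hq : IsQuandleOp op) (hab : IsAbelianOp op) :
    Subgroup.closure (Set.range (hq.orbitTranslation hab)) = ⊤ := by
  refine (congrArg Subgroup.closure ?_).trans
    (Subgroup.closure_closure_coe_preimage (k := Set.range hq.rightPerm))
  ext g
  constructor
  · rintro ⟨ω, rfl⟩
    induction ω using Quotient.inductionOn' with
    | h b => exact ⟨b, rfl⟩
  · rintro ⟨b, hb⟩
    exact ⟨Quotient.mk'' b, Subtype.ext hb⟩

end IsQuandleOp

/-- Every finite abelian quandle with `r` orbits is isomorphic to a
filtered-permutation quandle on `r` components, each component being a finite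
abelian group generated by the elements `x i k`, `k ∈ ℤ/r`. -/
theorem abelian_quandle_is_fp {X : Type*} [Finite X] (op : X → X → X)
    (hq : IsQuandleOp op) (hab : IsAbelianOp op) (r : ℕ) (hr : 1 ≤ r)
    (horb : Nat.card (Quotient (orbitSetoid op)) = r) :
    ∃ (A : ZMod r → AddCommGrpCat) (x : (i : ZMod r) → ZMod r → A i),
      (∀ i, x i 0 = 0) ∧ (∀ i, Finite (A i)) ∧
      (∀ i, AddSubgroup.closure (Set.range (x i)) = ⊤) ∧
      ∃ f : X ≃ Σ i, (A i : Type),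
        ∀ a b : X, f (op a b) = fpOp (fun i => (A i : Type)) x (f a) (f b) := by
  have := hq.isMulCommutative_innerGroup hab
  have : NeZero r := ⟨by omega⟩
  rw [hq.orbitSetoid_eq] at horb
  open scoped IsMulCommutative in
  exact MulAction.exists_fpOp_equiv horb (hq.orbitTranslation hab) hq.idem
    (hq.closure_range_orbitTranslation hab)
end

section
/- For any quandle (X,◁), the abelianization of its structure group G(X,◁) is isomorphic to the free abelian group on the set of orbits of (X,◁), via the isomorphism induced by sending the generator g_a to the basis element indexed by the orbit of a. -/
variable {X : Type*}

/-- The relators `g_a g_b (g_b g_{a ◁ b})⁻¹` of the structure group. -/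
def structureRels (op : X → X → X) : Set (FreeGroup X) :=
  {w | ∃ a b : X,
    w = FreeGroup.of a * FreeGroup.of b * (FreeGroup.of b * FreeGroup.of (op a b))⁻¹}

/-- The structure group `⟨g_a, a ∈ X | g_a g_b = g_b g_{a ◁ b}⟩` of a quandle. -/
abbrev StructureGroup (op : X → X → X) : Type _ := PresentedGroup (structureRels op)

/-! Every defining relation `g_a g_b = g_b g_{a ◁ b}` becomes `g_a = g_{a ◁ b}` once the group is
made abelian, so the abelianization is the free abelian group on the generators modulo the
identification of `a` with `a ◁ b`, i.e. free abelian on the orbits. -/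

variable (op : X → X → X)

theorem orbitRel.apply_eq_of_apply_op_eq {Y : Type*} (f : X → Y)
    (hf : ∀ a b, f (op a b) = f a) {a b : X} (h : orbitRel op a b) : f a = f b := by
  induction h with
  | rel x y hxy => obtain ⟨c, rfl⟩ := hxy; exact (hf x c).symm
  | refl x => rfl
  | symm x y _ ih => exact ih.symm
  | trans x y z _ _ ih₁ ih₂ => exact ih₁.trans ih₂

theorem orbitSetoid_mk_op (a b : X) :
    Quotient.mk (orbitSetoid op) (op a b) = Quotient.mk (orbitSetoid op) a :=
  Quotient.sound (Relation.EqvGen.symm _ _ (Relation.EqvGen.rel _ _ ⟨b, rfl⟩))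

namespace StructureGroup

theorem of_mul_of (a b : X) :
    (PresentedGroup.of a * PresentedGroup.of b : StructureGroup op) =
      PresentedGroup.of b * PresentedGroup.of (op a b) :=
  mul_inv_eq_one.1 (PresentedGroup.one_of_mem ⟨a, b, rfl⟩)

theorem abelianization_of_op (a b : X) :
    (Abelianization.of (PresentedGroup.of (op a b)) : Abelianization (StructureGroup op)) =
      Abelianization.of (PresentedGroup.of a) := by
  have h := congrArg Abelianization.of (of_mul_of op a b)
  rw [map_mul, map_mul, mul_comm] at h
  exact (mul_left_cancel h).symm

def abelianizationToOrbits :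
    Abelianization (StructureGroup op) →*
      Multiplicative (FreeAbelianGroup (Quotient (orbitSetoid op))) :=
  Abelianization.lift <| PresentedGroup.toGroup
    (f := fun a => Multiplicative.ofAdd (FreeAbelianGroup.of (Quotient.mk (orbitSetoid op) a))) <| by
      rintro _ ⟨a, b, rfl⟩
      simp only [map_mul, map_inv, FreeGroup.lift_apply_of, orbitSetoid_mk_op]
      exact mul_inv_eq_one.2 (mul_comm _ _)

theorem abelianizationToOrbits_of (a : X) :
    abelianizationToOrbits op (Abelianization.of (PresentedGroup.of a)) =
      Multiplicative.ofAdd (FreeAbelianGroup.of (Quotient.mk (orbitSetoid op) a)) := by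
  simp [abelianizationToOrbits, PresentedGroup.toGroup.of]

def orbitsToAbelianization :
    FreeAbelianGroup (Quotient (orbitSetoid op)) →+
      Additive (Abelianization (StructureGroup op)) :=
  let f a := Additive.ofMul (Abelianization.of (PresentedGroup.of a))
  FreeAbelianGroup.lift <| Quotient.lift f fun _ _ =>
    orbitRel.apply_eq_of_apply_op_eq op f fun a b =>
      congrArg Additive.ofMul (abelianization_of_op op a b)

theorem orbitsToAbelianization_of_mk (a : X) :
    orbitsToAbelianization op (FreeAbelianGroup.of (Quotient.mk (orbitSetoid op) a)) =
      Additive.ofMul (Abelianization.of (PresentedGroup.of a)) :=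
  FreeAbelianGroup.lift_apply_of _ _

def abelianizationEquivOrbits :
    Abelianization (StructureGroup op) ≃*
      Multiplicative (FreeAbelianGroup (Quotient (orbitSetoid op))) :=
  MonoidHom.toMulEquiv (abelianizationToOrbits op)
    (AddMonoidHom.toMultiplicativeLeft (orbitsToAbelianization op))
    (Abelianization.hom_ext _ _ <| PresentedGroup.ext fun a => by
      simp [abelianizationToOrbits_of, orbitsToAbelianization_of_mk])
    (AddMonoidHom.toMultiplicativeLeft.symm.injective <| FreeAbelianGroup.lift_ext _ _ <| by
      refine Quotient.ind fun a => ?_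
      simp [orbitsToAbelianization_of_mk, abelianizationToOrbits_of])

theorem abelianizationEquivOrbits_of (a : X) :
    abelianizationEquivOrbits op (Abelianization.of (PresentedGroup.of a)) =
      Multiplicative.ofAdd (FreeAbelianGroup.of (Quotient.mk (orbitSetoid op) a)) :=
  abelianizationToOrbits_of op a

end StructureGroup

theorem abelianization_structureGroup_general {X : Type*} (op : X → X → X) :
    ∃ e : Abelianization (StructureGroup op) ≃*
        Multiplicative (FreeAbelianGroup (Quotient (orbitSetoid op))),
      ∀ a : X, e (Abelianization.of (PresentedGroup.of a)) =
        Multiplicative.ofAdd (FreeAbelianGroup.of (Quotient.mk (orbitSetoid op) a)) :=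
  ⟨StructureGroup.abelianizationEquivOrbits op, StructureGroup.abelianizationEquivOrbits_of op⟩

/-- For any quandle, the abelianization of its structure group is
isomorphic to the free abelian group on the set of orbits, via `g_a ↦ [orbit of a]`. -/
theorem abelianization_structureGroup {X : Type*} (op : X → X → X)
    (hq : IsQuandleOp op) :
    ∃ e : Abelianization (StructureGroup op) ≃*
        Multiplicative (FreeAbelianGroup (Quotient (orbitSetoid op))),
      ∀ a : X, e (Abelianization.of (PresentedGroup.of a)) =
        Multiplicative.ofAdd (FreeAbelianGroup.of (Quotient.mk (orbitSetoid op) a)) :=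
  abelianization_structureGroup_general op
end

section
/- Let Q be a filtered-permutation quandle in which each A_i is a finite abelian group generated by {x_i(k) : k ∈ ℤ/r}. Then the commutator subgroup of the structure group G(Q,◁) is isomorphic to the quotient of the direct sum ⊕_{i ∈ ℤ/r} A_i by the subgroup generated by the elements ι_i(x_i(j−i)) + ι_j(x_j(i−j)) for all i,j ∈ ℤ/r, where ι_i : A_i → ⊕_k A_k denotes the canonical inclusion. -/
variable {X : Type*}

/-!
Write `t i = g_(i,0)` and `u i a = g_(i,a) * (t i)⁻¹`. The defining relations say that conjugation
by `t j` sends `g_(i,a)` to `g_(i, a + x i (j - i))`. Hence every `u i a` is central,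
`u i (x i (j - i))` is the commutator `⁅(t j)⁻¹, t i⁆`, and, since the `x i k` generate `A i`,
`a ↦ u i a` is additive. So the `u`'s assemble to a homomorphism `Θ` on `⊕ A i`; it kills the
relators `ιᵢ (x i (j - i)) + ιⱼ (x j (i - j))`, and its image is the commutator subgroup, because
modulo that image the generators commute.

`Θ` is injective on the quotient `B` by the relators: after choosing any total order on `ℤ/r`,
the structure group maps to the central extension of `ℤ^(ℤ/r)` by `B` with the bilinear cocycle
`c i j = [ιᵢ (x i (j - i))]` for `j < i` and `0` otherwise, via `g_(i,a) ↦ ([ιᵢ a], eᵢ)`; the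
relations hold because `c i j - c j i = [ιᵢ (x i (j - i))]`, and `u i a` goes to `([ιᵢ a], 0)`.
-/

open scoped commutatorElement IsMulCommutative

theorem map_add_eq_mul_of_closure_eq_top {A G : Type*} [AddGroup A] [Group G] {f : A → G}
    {S : Set A} (hS : AddSubgroup.closure S = ⊤) (h0 : f 0 = 1)
    (hf : ∀ a, ∀ s ∈ S, f (a + s) = f a * f s) (a b : A) : f (a + b) = f a * f b := by
  have hb : b ∈ AddSubgroup.closure S := hS ▸ AddSubgroup.mem_top b
  induction hb using AddSubgroup.closure_induction generalizing a with
  | mem s hs => exact hf a s hs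
  | zero => rw [add_zero, h0, mul_one]
  | add c d _ _ hc hd => rw [← add_assoc, hd, hc, hd c, mul_assoc]
  | neg c _ hc =>
    have hneg : f (-c) = (f c)⁻¹ := by
      rw [eq_inv_iff_mul_eq_one, ← hc, neg_add_cancel, h0]
    rw [hneg, eq_mul_inv_iff_mul_eq, ← hc, neg_add_cancel_right]

theorem isMulCommutative_of_closure_eq_top {G : Type*} [Group G] {k : Set G}
    (hk : Subgroup.closure k = ⊤) (hcomm : ∀ x ∈ k, ∀ y ∈ k, x * y = y * x) :
    IsMulCommutative G := by
  have hcl := Subgroup.isMulCommutative_closure hcomm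
  rw [hk] at hcl
  exact ⟨⟨fun a b => congrArg Subtype.val
    (mul_comm' (⟨a, Subgroup.mem_top a⟩ : (⊤ : Subgroup G)) ⟨b, Subgroup.mem_top b⟩)⟩⟩

theorem commutator_le_of_closure_eq_top {G : Type*} [Group G] {k : Set G}
    (hk : Subgroup.closure k = ⊤) {N : Subgroup G} [N.Normal]
    (hcomm : ∀ x ∈ k, ∀ y ∈ k, ⁅x, y⁆ ∈ N) : commutator G ≤ N := by
  rw [← Subgroup.Normal.quotient_commutative_iff_commutator_le]
  refine isMulCommutative_of_closure_eq_top (k := QuotientGroup.mk' N '' k) ?_ ?_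
  · rw [← MonoidHom.map_closure, hk, ← MonoidHom.range_eq_map,
      MonoidHom.range_eq_top.mpr (QuotientGroup.mk'_surjective N)]
  · rintro _ ⟨x, hx, rfl⟩ _ ⟨y, hy, rfl⟩
    rw [← commutatorElement_eq_one_iff_mul_comm, ← map_commutatorElement,
      QuotientGroup.mk'_apply, QuotientGroup.eq_one_iff]
    exact hcomm x hx y hy

theorem Subgroup.normal_of_le_center {G : Type*} [Group G] {H : Subgroup G}
    (h : H ≤ Subgroup.center G) : H.Normal :=
  ⟨fun n hn g => by rwa [Subgroup.mem_center_iff.mp (h hn) g, mul_inv_cancel_right]⟩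

section LowerTriangle
variable {ι M : Type*} [LinearOrder ι] [AddCommGroup M]

def lowerTriangle (d : ι → ι → M) (i j : ι) : M := if j < i then d i j else 0

theorem lowerTriangle_sub_swap {d : ι → ι → M} (hdiag : ∀ i, d i i = 0)
    (hanti : ∀ i j, d i j + d j i = 0) (i j : ι) :
    lowerTriangle d i j - lowerTriangle d j i = d i j := by
  rcases lt_trichotomy i j with h | rfl | h
  · simp [lowerTriangle, h, h.not_gt, eq_neg_of_add_eq_zero_left (hanti i j)]
  · simp [lowerTriangle, hdiag]
  · simp [lowerTriangle, h, h.not_gt]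

end LowerTriangle

@[ext]
structure BilinCentralExt {N M : Type*} [AddCommGroup N] [AddCommGroup M]
    (β : LinearMap.BilinMap ℤ N M) where
  fst : M
  snd : N

namespace BilinCentralExt
variable {N M : Type*} [AddCommGroup N] [AddCommGroup M] {β : LinearMap.BilinMap ℤ N M}

instance : Mul (BilinCentralExt β) :=
  ⟨fun a b => ⟨a.fst + b.fst + β a.snd b.snd, a.snd + b.snd⟩⟩
instance : One (BilinCentralExt β) := ⟨⟨0, 0⟩⟩
instance : Inv (BilinCentralExt β) := ⟨fun a => ⟨-a.fst + β a.snd a.snd, -a.snd⟩⟩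

@[simp] theorem mul_fst (a b : BilinCentralExt β) :
    (a * b).fst = a.fst + b.fst + β a.snd b.snd := rfl
@[simp] theorem mul_snd (a b : BilinCentralExt β) : (a * b).snd = a.snd + b.snd := rfl
@[simp] theorem one_fst : (1 : BilinCentralExt β).fst = 0 := rfl
@[simp] theorem one_snd : (1 : BilinCentralExt β).snd = 0 := rfl
@[simp] theorem inv_fst (a : BilinCentralExt β) : a⁻¹.fst = -a.fst + β a.snd a.snd := rfl
@[simp] theorem inv_snd (a : BilinCentralExt β) : a⁻¹.snd = -a.snd := rfl

instance : Group (BilinCentralExt β) where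
  mul_assoc a b c := by ext <;> simp <;> abel
  one_mul a := by ext <;> simp
  mul_one a := by ext <;> simp
  inv_mul_cancel a := by ext <;> simp

@[simps]
def inl : Multiplicative M →* BilinCentralExt β where
  toFun m := ⟨m.toAdd, 0⟩
  map_one' := rfl
  map_mul' m m' := by ext <;> simp

theorem inl_injective : Function.Injective (inl (β := β)) :=
  fun _ _ h => congrArg BilinCentralExt.fst h

end BilinCentralExt

namespace Finsupp
variable {ι M : Type*} [AddCommGroup M] (c : ι → ι → M)

noncomputable def bilinOfMatrix : LinearMap.BilinMap ℤ (ι →₀ ℤ) M :=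
  linearCombination ℤ fun i => linearCombination ℤ (c i)

@[simp] theorem bilinOfMatrix_single_single (i j : ι) :
    bilinOfMatrix c (single i 1) (single j 1) = c i j := by
  simp [bilinOfMatrix]
end Finsupp

namespace FPQuandle
variable {r : ℕ} {A : ZMod r → Type*} [∀ i, AddCommGroup (A i)]

section Generators
variable (x : (i : ZMod r) → ZMod r → A i)

def gen (i : ZMod r) (a : A i) : StructureGroup (fpOp A x) := PresentedGroup.of ⟨i, a⟩

def u (i : ZMod r) (a : A i) : StructureGroup (fpOp A x) := gen x i a * (gen x i 0)⁻¹

theorem gen_mul_gen (i j : ZMod r) (a : A i) (b : A j) :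
    gen x i a * gen x j b = gen x j b * gen x i (a + x i (j - i)) :=
  PresentedGroup.mk_eq_mk_of_mul_inv_mem ⟨⟨i, a⟩, ⟨j, b⟩, rfl⟩

theorem inv_gen_mul_gen_mul_gen (i j : ZMod r) (a : A i) :
    (gen x j 0)⁻¹ * gen x i a * gen x j 0 = gen x i (a + x i (j - i)) := by
  rw [mul_assoc, inv_mul_eq_iff_eq_mul, gen_mul_gen]

theorem u_mul_gen_zero (i : ZMod r) (a : A i) : u x i a * gen x i 0 = gen x i a :=
  inv_mul_cancel_right _ _

theorem u_zero (i : ZMod r) : u x i 0 = 1 := mul_inv_cancel _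

theorem u_x_eq_commutatorElement (i j : ZMod r) : u x i (x i (j - i)) = ⁅(gen x j 0)⁻¹, gen x i 0⁆ := by
  rw [u, ← zero_add (x i _), ← inv_gen_mul_gen_mul_gen, commutatorElement_def, inv_inv]

theorem u_mem_center (i : ZMod r) (a : A i) :
    u x i a ∈ Subgroup.center (StructureGroup (fpOp A x)) := by
  suffices h : ⊤ ≤ Subgroup.centralizer {u x i a} by
    exact Subgroup.mem_center_iff.mpr fun _ => Subgroup.mem_centralizer_singleton_iff.mp (h trivial)
  rw [← PresentedGroup.closure_range_of, Subgroup.closure_le]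
  rintro _ ⟨⟨j, b⟩, rfl⟩
  rw [SetLike.mem_coe, Subgroup.mem_centralizer_singleton_iff]
  change gen x j b * u x i a = u x i a * gen x j b
  rw [u, ← mul_assoc, gen_mul_gen, ← inv_gen_mul_gen_mul_gen]
  group

theorem u_add_x (i j : ZMod r) (a : A i) :
    u x i (a + x i (j - i)) = u x i a * u x i (x i (j - i)) := by
  have hc := Subgroup.mem_center_iff.mp (u_mem_center x i a) (gen x j 0)⁻¹
  rw [u_x_eq_commutatorElement, u, ← inv_gen_mul_gen_mul_gen, ← u_mul_gen_zero x i a, ← mul_assoc _ (u x i a), hc]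
  group

theorem u_add {i : ZMod r} (hgen : AddSubgroup.closure (Set.range (x i)) = ⊤) (a b : A i) :
    u x i (a + b) = u x i a * u x i b := by
  refine map_add_eq_mul_of_closure_eq_top hgen (u_zero x i) ?_ a b
  rintro a _ ⟨k, rfl⟩
  simpa only [add_sub_cancel_left] using u_add_x x i (i + k) a

theorem u_neg {i : ZMod r} (hgen : AddSubgroup.closure (Set.range (x i)) = ⊤) (a : A i) :
    u x i (-a) = (u x i a)⁻¹ :=
  eq_inv_of_mul_eq_one_left (by rw [← u_add x hgen, neg_add_cancel, u_zero])

theorem u_mem_commutator {i : ZMod r} (hgen : AddSubgroup.closure (Set.range (x i)) = ⊤)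
    (a : A i) : u x i a ∈ commutator (StructureGroup (fpOp A x)) := by
  have ha : a ∈ AddSubgroup.closure (Set.range (x i)) := hgen ▸ AddSubgroup.mem_top a
  induction ha using AddSubgroup.closure_induction with
  | mem _ hs =>
    obtain ⟨k, rfl⟩ := hs
    rw [← add_sub_cancel_left i k, u_x_eq_commutatorElement]
    exact Subgroup.commutator_mem_commutator (Subgroup.mem_top _) (Subgroup.mem_top _)
  | zero => rw [u_zero]; exact one_mem _
  | add a b _ _ ha hb => rw [u_add x hgen]; exact mul_mem ha hb
  | neg a _ ha => rw [u_neg x hgen]; exact inv_mem ha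

theorem u_x_mul_u_x_eq_one (i j : ZMod r) : u x i (x i (j - i)) * u x j (x j (i - j)) = 1 := by
  have hc := Subgroup.mem_center_iff.mp (u_mem_center x i (x i (j - i)))
    ((gen x i 0)⁻¹ * gen x j 0)
  calc u x i (x i (j - i)) * u x j (x j (i - j))
      = u x i (x i (j - i)) * ((gen x i 0)⁻¹ * gen x j 0) * (gen x i 0 * (gen x j 0)⁻¹) := by
        rw [u_x_eq_commutatorElement x j i]; group
    _ = (gen x i 0)⁻¹ * gen x j 0 * u x i (x i (j - i)) * (gen x i 0 * (gen x j 0)⁻¹) := by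
        rw [hc]
    _ = 1 := by rw [u_x_eq_commutatorElement]; group

theorem gen_add {i : ZMod r} (hgen : AddSubgroup.closure (Set.range (x i)) = ⊤) (a c : A i) :
    gen x i (a + c) = u x i c * gen x i a := by
  rw [← u_mul_gen_zero, add_comm, u_add x hgen, mul_assoc, u_mul_gen_zero]

theorem commutatorElement_gen_gen {i : ZMod r}
    (hgen : AddSubgroup.closure (Set.range (x i)) = ⊤) (j : ZMod r) (a : A i) (b : A j) :
    ⁅gen x i a, gen x j b⁆ = u x i (x i (j - i)) := by
  have hc := Subgroup.mem_center_iff.mp (u_mem_center x i (x i (j - i))) (gen x j b)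
  rw [commutatorElement_def, gen_mul_gen, gen_add x hgen, ← mul_assoc, hc]
  group

end Generators

section Theta
variable (x : (i : ZMod r) → ZMod r → A i)

abbrev relators : AddSubgroup (DirectSum (ZMod r) A) :=
  AddSubgroup.closure {z : DirectSum (ZMod r) A | ∃ i j : ZMod r,
    z = DirectSum.of A i (x i (j - i)) + DirectSum.of A j (x j (i - j))}

variable {x} (hgen : ∀ i, AddSubgroup.closure (Set.range (x i)) = ⊤)

def theta : DirectSum (ZMod r) A →+ Additive (Subgroup.center (StructureGroup (fpOp A x))) :=
  DirectSum.toAddMonoid fun i => AddMonoidHom.mk'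
    (fun a => Additive.ofMul ⟨u x i a, u_mem_center x i a⟩)
    (fun a b => congrArg Additive.ofMul (Subtype.ext (u_add x (hgen i) a b)))

theorem theta_of (i : ZMod r) (a : A i) :
    theta hgen (DirectSum.of A i a) = .ofMul ⟨u x i a, u_mem_center x i a⟩ :=
  DirectSum.toAddMonoid_of _ _ _

theorem relators_le_ker_theta : relators x ≤ (theta hgen).ker := by
  rw [AddSubgroup.closure_le]
  rintro _ ⟨i, j, rfl⟩
  rw [SetLike.mem_coe, AddMonoidHom.mem_ker, map_add, theta_of, theta_of]
  exact congrArg Additive.ofMul (Subtype.ext (u_x_mul_u_x_eq_one x i j))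

def thetaQuot :
    Multiplicative (DirectSum (ZMod r) A ⧸ relators x) →* StructureGroup (fpOp A x) :=
  (Subgroup.center _).subtype.comp
    (AddMonoidHom.toMultiplicativeLeft (QuotientAddGroup.lift _ _ (relators_le_ker_theta hgen)))

theorem thetaQuot_of (i : ZMod r) (a : A i) :
    thetaQuot hgen (.ofAdd (DirectSum.of A i a)) = u x i a := by
  simp [thetaQuot, theta_of]

theorem thetaQuot_mem_commutator (q : DirectSum (ZMod r) A ⧸ relators x) :
    thetaQuot hgen (.ofAdd q) ∈ commutator (StructureGroup (fpOp A x)) := by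
  induction q using QuotientAddGroup.induction_on with | H y =>
  induction y using DirectSum.induction_on with
  | zero => rw [QuotientAddGroup.mk_zero, ofAdd_zero, map_one]; exact one_mem _
  | of i a => rw [thetaQuot_of]; exact u_mem_commutator x (hgen i) a
  | add y y' hy hy' => rw [QuotientAddGroup.mk_add, ofAdd_add, map_mul]; exact mul_mem hy hy'

theorem range_thetaQuot_le_center : (thetaQuot hgen).range ≤ Subgroup.center _ := by
  rintro _ ⟨b, rfl⟩
  exact Subtype.property _

theorem range_thetaQuot : (thetaQuot hgen).range = commutator (StructureGroup (fpOp A x)) := by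
  refine le_antisymm (by rintro _ ⟨b, rfl⟩; exact thetaQuot_mem_commutator hgen b.toAdd) ?_
  have := Subgroup.normal_of_le_center (range_thetaQuot_le_center hgen)
  refine commutator_le_of_closure_eq_top (PresentedGroup.closure_range_of _) ?_
  rintro _ ⟨⟨i, a⟩, rfl⟩ _ ⟨⟨j, b⟩, rfl⟩
  exact ⟨_, (thetaQuot_of hgen i _).trans (commutatorElement_gen_gen x (hgen i) j a b).symm⟩

end Theta

variable {x : (i : ZMod r) → ZMod r → A i}

section Cocycle
variable [LinearOrder (ZMod r)]

variable (x) in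
noncomputable def cocycle : ZMod r → ZMod r → DirectSum (ZMod r) A ⧸ relators x :=
  lowerTriangle fun i j => (DirectSum.of A i (x i (j - i)) : DirectSum (ZMod r) A ⧸ relators x)

theorem cocycle_sub_swap (hx0 : ∀ i, x i 0 = 0) (i j : ZMod r) :
    cocycle x i j - cocycle x j i = (DirectSum.of A i (x i (j - i)) : _ ⧸ relators x) := by
  refine lowerTriangle_sub_swap (fun i => by simp [hx0]) (fun i j => ?_) i j
  rw [← QuotientAddGroup.mk_add, QuotientAddGroup.eq_zero_iff]
  exact AddSubgroup.subset_closure ⟨i, j, rfl⟩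

noncomputable def toBilinCentralExt (hx0 : ∀ i, x i 0 = 0) :
    StructureGroup (fpOp A x) →* BilinCentralExt (Finsupp.bilinOfMatrix (cocycle x)) :=
  PresentedGroup.toGroup
    (f := fun p => ⟨(DirectSum.of A p.1 p.2 : _ ⧸ relators x), .single p.1 1⟩)
    (by
      rintro _ ⟨⟨i, a⟩, ⟨j, b⟩, rfl⟩
      rw [show fpOp A x ⟨i, a⟩ ⟨j, b⟩ = ⟨i, a + x i (j - i)⟩ from rfl]
      simp only [map_mul, map_inv, FreeGroup.lift_apply_of, mul_inv_eq_one]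
      ext
      · simp only [BilinCentralExt.mul_fst, Finsupp.bilinOfMatrix_single_single]
        rw [map_add, QuotientAddGroup.mk_add, eq_add_of_sub_eq (cocycle_sub_swap hx0 i j)]
        abel
      · exact add_comm _ _)

theorem toBilinCentralExt_gen (hx0 : ∀ i, x i 0 = 0) (i : ZMod r) (a : A i) :
    toBilinCentralExt hx0 (gen x i a) = ⟨(DirectSum.of A i a : _ ⧸ relators x), .single i 1⟩ :=
  PresentedGroup.toGroup.of _

theorem toBilinCentralExt_u (hx0 : ∀ i, x i 0 = 0) (i : ZMod r) (a : A i) :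
    toBilinCentralExt hx0 (u x i a) =
      BilinCentralExt.inl (.ofAdd (DirectSum.of A i a : _ ⧸ relators x)) := by
  rw [u, map_mul, map_inv, toBilinCentralExt_gen, toBilinCentralExt_gen]
  ext1
  · simp only [BilinCentralExt.mul_fst, BilinCentralExt.inv_fst, BilinCentralExt.inv_snd,
      BilinCentralExt.inl_apply_fst, map_neg, map_zero, QuotientAddGroup.mk_zero,
      Finsupp.bilinOfMatrix_single_single, toAdd_ofAdd]
    abel
  · simp

theorem toBilinCentralExt_comp_thetaQuot (hx0 : ∀ i, x i 0 = 0)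
    (hgen : ∀ i, AddSubgroup.closure (Set.range (x i)) = ⊤) :
    (toBilinCentralExt hx0).comp (thetaQuot hgen) = BilinCentralExt.inl := by
  apply MonoidHom.toAdditiveRight.injective
  apply QuotientAddGroup.addMonoidHom_ext
  apply DirectSum.addHom_ext
  intro i a
  exact congrArg Additive.ofMul (by simp [thetaQuot_of, toBilinCentralExt_u])

end Cocycle

theorem thetaQuot_injective (hx0 : ∀ i, x i 0 = 0)
    (hgen : ∀ i, AddSubgroup.closure (Set.range (x i)) = ⊤) :
    Function.Injective (thetaQuot hgen) := by
  let _ := IsWellOrder.linearOrder (WellOrderingRel (α := ZMod r))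
  refine Function.Injective.of_comp (f := toBilinCentralExt hx0) ?_
  rw [← MonoidHom.coe_comp, toBilinCentralExt_comp_thetaQuot hx0 hgen]
  exact BilinCentralExt.inl_injective

end FPQuandle

theorem commutator_of_fp_structureGroup_general (r : ℕ) (A : ZMod r → Type*)
    [∀ i, AddCommGroup (A i)]
    (x : (i : ZMod r) → ZMod r → A i) (hx0 : ∀ i, x i 0 = 0)
    (hgen : ∀ i, AddSubgroup.closure (Set.range (x i)) = ⊤) :
    Nonempty (Additive ↥(commutator (StructureGroup (fpOp A x))) ≃+
      (DirectSum (ZMod r) A) ⧸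
        AddSubgroup.closure {z : DirectSum (ZMod r) A | ∃ i j : ZMod r,
          z = DirectSum.of A i (x i (j - i)) + DirectSum.of A j (x j (i - j))}) :=
  ⟨(MulEquiv.toAdditiveRight <|
    (MonoidHom.ofInjective (FPQuandle.thetaQuot_injective hx0 hgen)).trans
      (MulEquiv.subgroupCongr (FPQuandle.range_thetaQuot hgen))).symm⟩

/-- For an FP quandle with finite components `A i`, each generated by
`{x i k}`, the commutator subgroup of the structure group is isomorphic to
`(⊕ᵢ A i) / ⟨ιᵢ(x i (j-i)) + ιⱼ(x j (i-j))⟩`. -/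
theorem commutator_of_fp_structureGroup (r : ℕ) (hr : 1 ≤ r) (A : ZMod r → Type*)
    [∀ i, AddCommGroup (A i)] [∀ i, Finite (A i)]
    (x : (i : ZMod r) → ZMod r → A i) (hx0 : ∀ i, x i 0 = 0)
    (hgen : ∀ i, AddSubgroup.closure (Set.range (x i)) = ⊤) :
    Nonempty (Additive ↥(commutator (StructureGroup (fpOp A x))) ≃+
      (DirectSum (ZMod r) A) ⧸
        AddSubgroup.closure {z : DirectSum (ZMod r) A | ∃ i j : ZMod r,
          z = DirectSum.of A i (x i (j - i)) + DirectSum.of A j (x j (i - j))}) :=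
  commutator_of_fp_structureGroup_general r A x hx0 hgen
end

section
/- If the structure group G(X,◁) of a finite quandle (X,◁) is abelian, then (X,◁) is an abelian quandle, i.e. (a◁b)◁c = (a◁c)◁b for all a,b,c ∈ X. -/
variable {X : Type*}

/-! Right translations `R_a = (· ◁ a)` satisfy `R_b ∘ R_a = R_{a ◁ b} ∘ R_b`, which is exactly the
defining relation of the structure group read for `g_a ↦ R_a⁻¹`. So the structure group acts on `X`,
and if it is abelian then `R_b` and `R_c` commute, i.e. `(a ◁ b) ◁ c = (a ◁ c) ◁ b`. -/

section RightTranslation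

variable {op : X → X → X} (hbij : ∀ b, Function.Bijective fun a => op a b)

noncomputable def rightTranslation (b : X) : Equiv.Perm X :=
  Equiv.ofBijective _ (hbij b)

theorem rightTranslation_mul_rightTranslation
    (hsd : ∀ a b c, op (op a b) c = op (op a c) (op b c)) (a b : X) :
    rightTranslation hbij b * rightTranslation hbij a =
      rightTranslation hbij (op a b) * rightTranslation hbij b :=
  Equiv.ext fun x => hsd x a b

noncomputable def structureGroupToPerm (hsd : ∀ a b c, op (op a b) c = op (op a c) (op b c)) :
    StructureGroup op →* Equiv.Perm X :=
  PresentedGroup.toGroup (f := fun a => (rightTranslation hbij a)⁻¹) <| by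
    rintro _ ⟨a, b, rfl⟩
    rw [map_mul, map_inv, mul_inv_eq_one, map_mul, map_mul]
    simp only [FreeGroup.lift_apply_of]
    rw [← mul_inv_rev, ← mul_inv_rev, rightTranslation_mul_rightTranslation hbij hsd]

theorem structureGroupToPerm_of (hsd : ∀ a b c, op (op a b) c = op (op a c) (op b c)) (a : X) :
    structureGroupToPerm hbij hsd (PresentedGroup.of a) = (rightTranslation hbij a)⁻¹ :=
  PresentedGroup.toGroup.of _

theorem isAbelianOp_of_commute_rightTranslation
    (hcomm : ∀ b c, Commute (rightTranslation hbij b) (rightTranslation hbij c)) :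
    IsAbelianOp op := fun a b c =>
  congrArg (· a) (hcomm c b).eq

end RightTranslation

theorem abelian_of_abelian_structureGroup_general {X : Type*} (op : X → X → X)
    (hq : IsQuandleOp op)
    (hcomm : ∀ g h : StructureGroup op, g * h = h * g) :
    IsAbelianOp op := by
  refine isAbelianOp_of_commute_rightTranslation hq.bij fun b c => ?_
  have h : Commute (PresentedGroup.of b : StructureGroup op) (PresentedGroup.of c) :=
    hcomm _ _
  simpa only [structureGroupToPerm_of, Commute.inv_inv_iff] using
    h.map (structureGroupToPerm hq.bij hq.sd)

/-- If the structure group of a finite quandle is abelian,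
then the quandle is abelian. -/
theorem abelian_of_abelian_structureGroup {X : Type*} [Finite X] (op : X → X → X)
    (hq : IsQuandleOp op)
    (hcomm : ∀ g h : StructureGroup op, g * h = h * g) :
    IsAbelianOp op :=
  abelian_of_abelian_structureGroup_general op hq hcomm
end

section
/- Let (X,◁) be a finite quandle with r orbits. If its structure group G(X,◁) is abelian, then G(X,◁) is free abelian of rank r, i.e. isomorphic to ℤ^r. -/
variable {X : Type*}

/-!
Abelianizing the defining relation `g_a g_b = g_b g_{a ◁ b}` gives `g_a = g_{a ◁ b}`, so the
abelianization of the structure group is the free abelian group on the orbits, with basis the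
classes of the generators. An abelian structure group is its own abelianization.
-/

namespace StructureGroup

variable (op : X → X → X)

theorem abelianization_of_eq_of_orbitRel {a b : X} (h : orbitRel op a b) :
    Abelianization.of (PresentedGroup.of a : StructureGroup op) =
      Abelianization.of (PresentedGroup.of b) := by
  induction h with
  | rel a _ hab =>
    obtain ⟨c, rfl⟩ := hab
    have hrel := congrArg Abelianization.of (of_mul_of op a c)
    rw [map_mul, map_mul, mul_comm] at hrel
    exact mul_left_cancel hrel
  | refl => rfl
  | symm _ _ _ ih => exact ih.symm
  | trans _ _ _ _ _ ih₁ ih₂ => exact ih₁.trans ih₂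

noncomputable def abelianizationEquiv :
    Abelianization (StructureGroup op) ≃*
      Multiplicative (FreeAbelianGroup (Quotient (orbitSetoid op))) :=
  MonoidHom.toMulEquiv
    (Abelianization.lift <| PresentedGroup.toGroup (f := fun a => .ofAdd (.of ⟦a⟧)) <| by
      rintro _ ⟨a, b, rfl⟩
      have hab : (⟦op a b⟧ : Quotient (orbitSetoid op)) = ⟦a⟧ :=
        Quotient.sound (.symm _ _ (.rel _ _ ⟨b, rfl⟩))
      simp only [map_mul, map_inv, FreeGroup.lift_apply_of, hab]
      exact mul_inv_eq_one.mpr (mul_comm _ _))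
    (AddMonoidHom.toMultiplicativeLeft <| FreeAbelianGroup.lift fun q =>
      .ofMul <| Quotient.lift (fun a => Abelianization.of (PresentedGroup.of a))
        (fun _ _ => abelianization_of_eq_of_orbitRel op) q)
    (Abelianization.hom_ext _ _ <| PresentedGroup.ext fun _ => rfl)
    (by
      ext q
      induction q using Quotient.inductionOn
      rfl)

end StructureGroup

noncomputable def FreeAbelianGroup.equivFinPi (α : Type*) [Finite α] :
    FreeAbelianGroup α ≃+ (Fin (Nat.card α) → ℤ) :=
  (equivOfEquiv (Finite.equivFin α)).trans <|
    (equivFinsupp _).trans (Finsupp.linearEquivFunOnFinite ℤ ℤ _).toAddEquiv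

theorem structureGroup_free_abelian_general {X : Type*} [Finite X] (op : X → X → X) (r : ℕ)
    (horb : Nat.card (Quotient (orbitSetoid op)) = r)
    (hcomm : ∀ g h : StructureGroup op, g * h = h * g) :
    Nonempty (StructureGroup op ≃* Multiplicative (Fin r → ℤ)) := by
  let _ : CommGroup (StructureGroup op) := { mul_comm := hcomm }
  subst horb
  exact ⟨Abelianization.equivOfComm.trans <| (StructureGroup.abelianizationEquiv op).trans <|
    (FreeAbelianGroup.equivFinPi _).toMultiplicative⟩

/-- If the structure group of a finite quandle with `r` orbits is
abelian, then it is free abelian of rank `r`, i.e. isomorphic to `ℤ^r`. -/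
theorem structureGroup_free_abelian {X : Type*} [Finite X] (op : X → X → X)
    (hq : IsQuandleOp op) (r : ℕ)
    (horb : Nat.card (Quotient (orbitSetoid op)) = r)
    (hcomm : ∀ g h : StructureGroup op, g * h = h * g) :
    Nonempty (StructureGroup op ≃* Multiplicative (Fin r → ℤ)) :=
  structureGroup_free_abelian_general op r horb hcomm
end

section
/- Let a,b,c,u,v,w,x,y,z be integers. The subgroup of ℤ³ generated by the six vectors (a,0,0), (0,b,0), (0,0,c), (u,v,0), (w,0,x), (0,y,z) is all of ℤ³ if and only if the following three conditions hold: (1) gcd(a,u,w) = gcd(b,v,y) = gcd(c,x,z) = 1; (2) gcd(a,b,w,y) = gcd(a,c,u,z) = gcd(b,c,v,x) = 1; (3) gcd(a,b,c, u·x·y + v·w·z) = 1. -/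
variable {X : Type*}

/-- The (nonnegative) gcd of three integers. -/
def gcd3 (a b c : ℤ) : ℕ := Nat.gcd a.natAbs (Nat.gcd b.natAbs c.natAbs)

/-- The (nonnegative) gcd of four integers. -/
def gcd4 (a b c d : ℤ) : ℕ := Nat.gcd a.natAbs (gcd3 b c d)

section Aux

lemma exists_hom_zmod' (G : Type*) [AddCommGroup G] [hFG : AddGroup.FG G]
    (h : ∃ g : G, g ≠ 0) :
    ∃ (p : ℕ), p.Prime ∧ ∃ ψ : G →+ ZMod p, ∃ g : G, ψ g ≠ 0 := by
  obtain ⟨n, ι, fι, p, hp, e, ⟨f⟩⟩ := AddCommGroup.equiv_free_prod_directSum_zmod G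
  haveI : DecidableEq ι := Classical.decEq ι
  obtain ⟨g, hg⟩ := h
  have hfg : f g ≠ 0 := by
    intro hh
    exact hg (by simpa using congrArg f.symm hh)
  rcases ne_or_eq (f g).1 0 with h1 | h1
  · obtain ⟨i, hi⟩ : ∃ i, (f g).1 i ≠ 0 := by
      by_contra hc; push_neg at hc; exact h1 (Finsupp.ext hc)
    refine ⟨2, Nat.prime_two, ?_⟩
    refine ⟨(Int.castAddHom (ZMod 2)).comp
      ((Finsupp.applyAddHom i).comp ((AddMonoidHom.fst _ _).comp f.toAddMonoidHom)), ?_⟩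
    refine ⟨f.symm (Finsupp.single i 1, 0), ?_⟩
    simp
  · have h2 : (f g).2 ≠ 0 := fun hc => hfg (Prod.ext h1 hc)
    obtain ⟨i, hi⟩ : ∃ i, (f g).2 i ≠ 0 := by
      by_contra hc; push_neg at hc; exact h2 (DFinsupp.ext hc)
    have hei : e i ≠ 0 := by
      rintro h0
      have : Subsingleton (ZMod (p i ^ e i)) := by rw [h0, pow_zero]; infer_instance
      exact hi (Subsingleton.elim _ _)
    refine ⟨p i, hp i, ?_⟩
    haveI : Fact (Nat.Prime (p i)) := ⟨hp i⟩
    have hdvd : p i ∣ p i ^ e i := dvd_pow_self _ hei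
    refine ⟨((ZMod.castHom hdvd (ZMod (p i))).toAddMonoidHom.comp
      ((DFinsupp.evalAddMonoidHom i).comp
        ((AddMonoidHom.snd _ _).comp f.toAddMonoidHom))), ?_⟩
    refine ⟨f.symm (0, DirectSum.of (fun j => ZMod (p j ^ e j)) i 1), ?_⟩
    have key : ((f (f.symm (0, DirectSum.of (fun j => ZMod (p j ^ e j)) i 1))).2) i
        = (1 : ZMod (p i ^ e i)) := by
      rw [f.apply_symm_apply]
      simp [DirectSum.of_eq_same]
    show (ZMod.castHom hdvd (ZMod (p i)))
      ((f (f.symm (0, DirectSum.of (fun j => ZMod (p j ^ e j)) i 1))).2 i) ≠ 0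
    rw [key, map_one]
    exact one_ne_zero

lemma exists_functional' (H : AddSubgroup (ℤ×ℤ×ℤ)) (hne : H ≠ ⊤) :
    ∃ p : ℕ, p.Prime ∧ ∃ φ : (ℤ×ℤ×ℤ) →+ ZMod p,
      (∃ v, φ v ≠ 0) ∧ ∀ h ∈ H, φ h = 0 := by
  haveI : AddGroup.FG (ℤ×ℤ×ℤ) := Module.Finite.iff_addGroup_fg.mp inferInstance
  obtain ⟨v, hv⟩ : ∃ v : ℤ×ℤ×ℤ, v ∉ H := by
    by_contra hc; push_neg at hc
    exact hne (AddSubgroup.eq_top_iff' H |>.mpr hc)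
  have hq : ∃ q : (ℤ×ℤ×ℤ) ⧸ H, q ≠ 0 :=
    ⟨QuotientAddGroup.mk' H v, fun hc => hv ((QuotientAddGroup.eq_zero_iff v).mp hc)⟩
  obtain ⟨p, pp, ψ, g, hg⟩ := exists_hom_zmod' ((ℤ×ℤ×ℤ) ⧸ H) hq
  obtain ⟨w, rfl⟩ := QuotientAddGroup.mk'_surjective H g
  exact ⟨p, pp, ψ.comp (QuotientAddGroup.mk' H), ⟨w, hg⟩,
    fun h hh => by simp [(QuotientAddGroup.eq_zero_iff h).mpr hh]⟩

lemma dvd_gcd3_iff' (p : ℕ) (a b c : ℤ) :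
    p ∣ gcd3 a b c ↔ ((a : ZMod p) = 0 ∧ (b : ZMod p) = 0 ∧ (c : ZMod p) = 0) := by
  simp [gcd3, Nat.dvd_gcd_iff, ZMod.intCast_zmod_eq_zero_iff_dvd, Int.natCast_dvd]

lemma dvd_gcd4_iff' (p : ℕ) (a b c d : ℤ) :
    p ∣ gcd4 a b c d ↔
      ((a : ZMod p) = 0 ∧ (b : ZMod p) = 0 ∧ (c : ZMod p) = 0 ∧ (d : ZMod p) = 0) := by
  simp [gcd4, Nat.dvd_gcd_iff, dvd_gcd3_iff', ZMod.intCast_zmod_eq_zero_iff_dvd,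
    Int.natCast_dvd, and_assoc]

/-- The linear functional on `ℤ³` with coefficients `α β γ` in `ZMod p`. -/
def linZ {p : ℕ} (α β γ : ZMod p) : (ℤ×ℤ×ℤ) →+ ZMod p :=
  AddMonoidHom.mk' (fun v => α * (v.1 : ZMod p) + β * (v.2.1 : ZMod p) + γ * (v.2.2 : ZMod p))
    (by intro s t; simp [Prod.fst_add, Prod.snd_add]; ring)

lemma linZ_apply {p : ℕ} (α β γ : ZMod p) (v : ℤ×ℤ×ℤ) :
    linZ α β γ v = α * (v.1 : ZMod p) + β * (v.2.1 : ZMod p) + γ * (v.2.2 : ZMod p) := rfl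

lemma top_kills {p : ℕ} {S : Set (ℤ×ℤ×ℤ)} (h : AddSubgroup.closure S = ⊤)
    (φ : (ℤ×ℤ×ℤ) →+ ZMod p) (hS : ∀ g ∈ S, φ g = 0) (v : ℤ×ℤ×ℤ) : φ v = 0 := by
  have hle : AddSubgroup.closure S ≤ φ.ker :=
    (AddSubgroup.closure_le _).mpr (fun g hg => AddMonoidHom.mem_ker.mpr (hS g hg))
  rw [h] at hle
  exact hle (AddSubgroup.mem_top v)

end Aux

/-- The subgroup of `ℤ³` generated by `(a,0,0), (0,b,0), (0,0,c),
(u,v,0), (w,0,x), (0,y,z)` is all of `ℤ³` iff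
(1) `gcd(a,u,w) = gcd(b,v,y) = gcd(c,x,z) = 1`;
(2) `gcd(a,b,w,y) = gcd(a,c,u,z) = gcd(b,c,v,x) = 1`;
(3) `gcd(a,b,c, uxy + vwz) = 1`. -/
theorem z3_closure_eq_top_iff (a b c u v w x y z : ℤ) :
    AddSubgroup.closure ({(a,0,0), (0,b,0), (0,0,c), (u,v,0), (w,0,x), (0,y,z)} :
        Set (ℤ × ℤ × ℤ)) = ⊤ ↔
      ((gcd3 a u w = 1 ∧ gcd3 b v y = 1 ∧ gcd3 c x z = 1) ∧
        (gcd4 a b w y = 1 ∧ gcd4 a c u z = 1 ∧ gcd4 b c v x = 1) ∧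
        gcd4 a b c (u * x * y + v * w * z) = 1) := by
  set S : Set (ℤ × ℤ × ℤ) := {(a,0,0), (0,b,0), (0,0,c), (u,v,0), (w,0,x), (0,y,z)} with hS
  constructor
  · -- closure = ⊤ → gcd conditions
    intro htop
    -- generic contradiction maker
    have key : ∀ p : ℕ, p.Prime → ∀ α β γ : ZMod p,
        (∀ g ∈ S, linZ α β γ g = 0) → ∀ v : ℤ×ℤ×ℤ, linZ α β γ v = 0 :=
      fun p pp α β γ hk => top_kills htop _ hk
    refine ⟨⟨?_, ?_, ?_⟩, ⟨?_, ?_, ?_⟩, ?_⟩ <;>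
      rw [Nat.eq_one_iff_not_exists_prime_dvd] <;>
      intro p pp hdvd <;>
      haveI : Fact p.Prime := ⟨pp⟩
    · -- gcd3 a u w
      rw [dvd_gcd3_iff'] at hdvd
      obtain ⟨ha, hu, hw⟩ := hdvd
      have := key p pp 1 0 0 ?_ ((1:ℤ),(0:ℤ),(0:ℤ))
      · simp [linZ_apply] at this
      · intro g hg
        simp only [hS, Set.mem_insert_iff, Set.mem_singleton_iff] at hg
        rcases hg with rfl|rfl|rfl|rfl|rfl|rfl <;> simp [linZ_apply, ha, hu, hw]
    · -- gcd3 b v y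
      rw [dvd_gcd3_iff'] at hdvd
      obtain ⟨hb, hv, hy⟩ := hdvd
      have := key p pp 0 1 0 ?_ ((0:ℤ),(1:ℤ),(0:ℤ))
      · simp [linZ_apply] at this
      · intro g hg
        simp only [hS, Set.mem_insert_iff, Set.mem_singleton_iff] at hg
        rcases hg with rfl|rfl|rfl|rfl|rfl|rfl <;> simp [linZ_apply, hb, hv, hy]
    · -- gcd3 c x z
      rw [dvd_gcd3_iff'] at hdvd
      obtain ⟨hc, hx, hz⟩ := hdvd
      have := key p pp 0 0 1 ?_ ((0:ℤ),(0:ℤ),(1:ℤ))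
      · simp [linZ_apply] at this
      · intro g hg
        simp only [hS, Set.mem_insert_iff, Set.mem_singleton_iff] at hg
        rcases hg with rfl|rfl|rfl|rfl|rfl|rfl <;> simp [linZ_apply, hc, hx, hz]
    · -- gcd4 a b w y
      rw [dvd_gcd4_iff'] at hdvd
      obtain ⟨ha, hb, hw, hy⟩ := hdvd
      rcases eq_or_ne (u : ZMod p) 0 with hu | hu
      · have := key p pp 1 0 0 ?_ ((1:ℤ),(0:ℤ),(0:ℤ))
        · simp [linZ_apply] at this
        · intro g hg
          simp only [hS, Set.mem_insert_iff, Set.mem_singleton_iff] at hg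
          rcases hg with rfl|rfl|rfl|rfl|rfl|rfl <;> simp [linZ_apply, ha, hu, hw]
      · have := key p pp (v : ZMod p) (-(u : ZMod p)) 0 ?_ ((0:ℤ),(1:ℤ),(0:ℤ))
        · simp [linZ_apply] at this
          exact hu this
        · intro g hg
          simp only [hS, Set.mem_insert_iff, Set.mem_singleton_iff] at hg
          rcases hg with rfl|rfl|rfl|rfl|rfl|rfl <;>
            simp [linZ_apply, ha, hb, hw, hy] <;> ring
    · -- gcd4 a c u z
      rw [dvd_gcd4_iff'] at hdvd
      obtain ⟨ha, hc, hu, hz⟩ := hdvd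
      rcases eq_or_ne (w : ZMod p) 0 with hw | hw
      · have := key p pp 1 0 0 ?_ ((1:ℤ),(0:ℤ),(0:ℤ))
        · simp [linZ_apply] at this
        · intro g hg
          simp only [hS, Set.mem_insert_iff, Set.mem_singleton_iff] at hg
          rcases hg with rfl|rfl|rfl|rfl|rfl|rfl <;> simp [linZ_apply, ha, hu, hw]
      · have := key p pp (x : ZMod p) 0 (-(w : ZMod p)) ?_ ((0:ℤ),(0:ℤ),(1:ℤ))
        · simp [linZ_apply] at this
          exact hw this
        · intro g hg
          simp only [hS, Set.mem_insert_iff, Set.mem_singleton_iff] at hg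
          rcases hg with rfl|rfl|rfl|rfl|rfl|rfl <;>
            simp [linZ_apply, ha, hc, hu, hz] <;> ring
    · -- gcd4 b c v x
      rw [dvd_gcd4_iff'] at hdvd
      obtain ⟨hb, hc, hv, hx⟩ := hdvd
      rcases eq_or_ne (y : ZMod p) 0 with hy | hy
      · have := key p pp 0 1 0 ?_ ((0:ℤ),(1:ℤ),(0:ℤ))
        · simp [linZ_apply] at this
        · intro g hg
          simp only [hS, Set.mem_insert_iff, Set.mem_singleton_iff] at hg
          rcases hg with rfl|rfl|rfl|rfl|rfl|rfl <;> simp [linZ_apply, hb, hv, hy]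
      · have := key p pp 0 (z : ZMod p) (-(y : ZMod p)) ?_ ((0:ℤ),(0:ℤ),(1:ℤ))
        · simp [linZ_apply] at this
          exact hy this
        · intro g hg
          simp only [hS, Set.mem_insert_iff, Set.mem_singleton_iff] at hg
          rcases hg with rfl|rfl|rfl|rfl|rfl|rfl <;>
            simp [linZ_apply, hb, hc, hv, hx] <;> ring
    · -- gcd4 a b c s
      rw [dvd_gcd4_iff'] at hdvd
      obtain ⟨ha, hb, hc, hs⟩ := hdvd
      push_cast at hs
      set M : Matrix (Fin 3) (Fin 3) (ZMod p) :=
        !![(u : ZMod p), v, 0; (w : ZMod p), 0, x; (0 : ZMod p), y, z] with hM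
      have hdet : M.det = 0 := by
        rw [Matrix.det_fin_three]
        simp [hM]
        linear_combination -hs
      obtain ⟨g, hg0, hgM⟩ := (Matrix.exists_mulVec_eq_zero_iff).mpr hdet
      have e1 : (u : ZMod p) * g 0 + (v : ZMod p) * g 1 = 0 := by
        have := congrFun hgM 0
        simpa [hM, Matrix.mulVec, dotProduct, Fin.sum_univ_three] using this
      have e2 : (w : ZMod p) * g 0 + (x : ZMod p) * g 2 = 0 := by
        have := congrFun hgM 1
        simpa [hM, Matrix.mulVec, dotProduct, Fin.sum_univ_three] using this
      have e3 : (y : ZMod p) * g 1 + (z : ZMod p) * g 2 = 0 := by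
        have := congrFun hgM 2
        simpa [hM, Matrix.mulVec, dotProduct, Fin.sum_univ_three] using this
      have hkill : ∀ gg ∈ S, linZ (g 0) (g 1) (g 2) gg = 0 := by
        intro gg hgg
        simp only [hS, Set.mem_insert_iff, Set.mem_singleton_iff] at hgg
        rcases hgg with rfl|rfl|rfl|rfl|rfl|rfl <;> simp [linZ_apply, ha, hb, hc]
        · linear_combination e1
        · linear_combination e2
        · linear_combination e3
      have hall := key p pp (g 0) (g 1) (g 2) hkill
      apply hg0
      funext i
      fin_cases i
      · have := hall ((1:ℤ),(0:ℤ),(0:ℤ)); simpa [linZ_apply] using this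
      · have := hall ((0:ℤ),(1:ℤ),(0:ℤ)); simpa [linZ_apply] using this
      · have := hall ((0:ℤ),(0:ℤ),(1:ℤ)); simpa [linZ_apply] using this
  · -- gcd conditions → closure = ⊤
    rintro ⟨⟨h1, h2, h3⟩, ⟨h4, h5, h6⟩, h7⟩
    by_contra hne
    obtain ⟨p, pp, φ, ⟨v0, hv0⟩, hker⟩ := exists_functional' _ hne
    haveI : Fact p.Prime := ⟨pp⟩
    set α := φ ((1:ℤ),(0:ℤ),(0:ℤ)) with hα
    set β := φ ((0:ℤ),(1:ℤ),(0:ℤ)) with hβ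
    set γ := φ ((0:ℤ),(0:ℤ),(1:ℤ)) with hγ
    have hrep : ∀ t : ℤ×ℤ×ℤ,
        φ t = (t.1 : ZMod p) * α + (t.2.1 : ZMod p) * β + (t.2.2 : ZMod p) * γ := by
      intro t
      obtain ⟨t1, t2, t3⟩ := t
      have ht : (t1, t2, t3) =
          t1 • ((1:ℤ),(0:ℤ),(0:ℤ)) + t2 • ((0:ℤ),(1:ℤ),(0:ℤ)) + t3 • ((0:ℤ),(0:ℤ),(1:ℤ)) := by
        simp [Prod.ext_iff, smul_eq_mul]
      show φ (t1, t2, t3) = (t1 : ZMod p) * α + (t2 : ZMod p) * β + (t3 : ZMod p) * γ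
      rw [ht, map_add, map_add, map_zsmul, map_zsmul, map_zsmul,
        ← hα, ← hβ, ← hγ, zsmul_eq_mul, zsmul_eq_mul, zsmul_eq_mul]
    have hmem : ∀ gg ∈ S, φ gg = 0 := fun gg hgg => hker gg (AddSubgroup.subset_closure hgg)
    have ea : (a : ZMod p) * α = 0 := by
      have := hmem (a,0,0) (by simp [hS]); rw [hrep] at this; simpa using this
    have eb : (b : ZMod p) * β = 0 := by
      have := hmem (0,b,0) (by simp [hS]); rw [hrep] at this; simpa using this
    have ec : (c : ZMod p) * γ = 0 := by
      have := hmem (0,0,c) (by simp [hS]); rw [hrep] at this; simpa using this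
    have euv : (u : ZMod p) * α + (v : ZMod p) * β = 0 := by
      have := hmem (u,v,0) (by simp [hS]); rw [hrep] at this; simpa using this
    have ewx : (w : ZMod p) * α + (x : ZMod p) * γ = 0 := by
      have := hmem (w,0,x) (by simp [hS]); rw [hrep] at this; simpa using this
    have eyz : (y : ZMod p) * β + (z : ZMod p) * γ = 0 := by
      have := hmem (0,y,z) (by simp [hS]); rw [hrep] at this; simpa using this
    have contra : ∀ n : ℕ, n = 1 → p ∣ n → False := by
      rintro n rfl hd
      exact pp.one_lt.ne' (Nat.dvd_one.mp hd)
    have z_of : ∀ (m : ℤ) (ξ : ZMod p), (m : ZMod p) * ξ = 0 → ξ ≠ 0 → (m : ZMod p) = 0 :=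
      fun m ξ hm hξ => (mul_eq_zero.mp hm).resolve_right hξ
    rcases eq_or_ne α 0 with hα0 | hα0 <;> rcases eq_or_ne β 0 with hβ0 | hβ0 <;>
      rcases eq_or_ne γ 0 with hγ0 | hγ0
    · -- all zero: φ = 0, contradiction
      exact hv0 (by rw [hrep v0, hα0, hβ0, hγ0]; ring)
    · -- γ ≠ 0 only
      refine contra _ h3 ((dvd_gcd3_iff' p c x z).mpr ⟨z_of c γ ec hγ0, ?_, ?_⟩)
      · exact z_of x γ (by rw [hα0] at ewx; linear_combination ewx) hγ0
      · exact z_of z γ (by rw [hβ0] at eyz; linear_combination eyz) hγ0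
    · -- β ≠ 0 only
      refine contra _ h2 ((dvd_gcd3_iff' p b v y).mpr ⟨z_of b β eb hβ0, ?_, ?_⟩)
      · exact z_of v β (by rw [hα0] at euv; linear_combination euv) hβ0
      · exact z_of y β (by rw [hγ0] at eyz; linear_combination eyz) hβ0
    · -- β, γ ≠ 0
      refine contra _ h6 ((dvd_gcd4_iff' p b c v x).mpr
        ⟨z_of b β eb hβ0, z_of c γ ec hγ0, ?_, ?_⟩)
      · exact z_of v β (by rw [hα0] at euv; linear_combination euv) hβ0
      · exact z_of x γ (by rw [hα0] at ewx; linear_combination ewx) hγ0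
    · -- α ≠ 0 only
      refine contra _ h1 ((dvd_gcd3_iff' p a u w).mpr ⟨z_of a α ea hα0, ?_, ?_⟩)
      · exact z_of u α (by rw [hβ0] at euv; linear_combination euv) hα0
      · exact z_of w α (by rw [hγ0] at ewx; linear_combination ewx) hα0
    · -- α, γ ≠ 0
      refine contra _ h5 ((dvd_gcd4_iff' p a c u z).mpr
        ⟨z_of a α ea hα0, z_of c γ ec hγ0, ?_, ?_⟩)
      · exact z_of u α (by rw [hβ0] at euv; linear_combination euv) hα0
      · exact z_of z γ (by rw [hβ0] at eyz; linear_combination eyz) hγ0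
    · -- α, β ≠ 0
      refine contra _ h4 ((dvd_gcd4_iff' p a b w y).mpr
        ⟨z_of a α ea hα0, z_of b β eb hβ0, ?_, ?_⟩)
      · exact z_of w α (by rw [hγ0] at ewx; linear_combination ewx) hα0
      · exact z_of y β (by rw [hγ0] at eyz; linear_combination eyz) hβ0
    · -- all nonzero
      refine contra _ h7 ((dvd_gcd4_iff' p a b c _).mpr
        ⟨z_of a α ea hα0, z_of b β eb hβ0, z_of c γ ec hγ0, ?_⟩)
      have hab : α * β * ((u : ZMod p) * x * y + (v : ZMod p) * w * z) = 0 := by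
        linear_combination (β * (x : ZMod p) * (y : ZMod p)) * euv +
          (β * (v : ZMod p) * (z : ZMod p)) * ewx - (β * (v : ZMod p) * (x : ZMod p)) * eyz
      have : ((u : ZMod p) * x * y + (v : ZMod p) * w * z) = 0 := by
        rcases mul_eq_zero.mp hab with h | h
        · exact absurd h (mul_ne_zero hα0 hβ0)
        · exact h
      push_cast
      linear_combination this
end

section
/- Let a,b,c,d be integers. The following three conditions are equivalent: (a) the subgroup of ℤ² generated by the vectors (a,0), (0,b), (c,d) is all of ℤ²; (b) gcd(a·b, a·d, b·c) = 1; (c) gcd(a,b) = gcd(a,c) = gcd(b,d) = 1. -/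
variable {X : Type*}

/-!
The subgroup is the image of the map `ℤ³ → ℤ²` with matrix `M = [[a, 0, c], [0, b, d]]`, whose
`2 × 2` minors are `ab`, `ad` and `-bc`. If `M X = 1` for an integer `3 × 2` matrix `X`, the
Cauchy–Binet formula writes `1 = det (M X)` as an integer combination of these minors. Conversely,
by Cramer's rule `Δ • ℤ² ⊆ M ℤ³` for every maximal minor `Δ`, so a Bézout relation between the
minors gives `ℤ² ⊆ M ℤ³`. A common divisor of `a, b` (or of `a, c`, or of `b, d`) divides all three
minors; conversely, each monomial of the product of the three Bézout relations is a multiple of a minor.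
-/

theorem dvd_gcd3 {k : ℕ} {p q r : ℤ} (hp : (k : ℤ) ∣ p) (hq : (k : ℤ) ∣ q) (hr : (k : ℤ) ∣ r) :
    k ∣ gcd3 p q r :=
  Nat.dvd_gcd (Int.natCast_dvd.mp hp) (Nat.dvd_gcd (Int.natCast_dvd.mp hq) (Int.natCast_dvd.mp hr))

theorem gcd3_eq_one_iff (p q r : ℤ) : gcd3 p q r = 1 ↔ ∃ x y z : ℤ, x * p + y * q + z * r = 1 := by
  constructor
  · intro h
    have hg : gcd3 p q r = Int.gcd p (Int.gcd q r) := by simp [gcd3, Int.gcd]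
    have hp := Int.gcd_eq_gcd_ab p (Int.gcd q r)
    have hqr := Int.gcd_eq_gcd_ab q r
    rw [← hg, h, Nat.cast_one] at hp
    exact ⟨p.gcdA (q.gcd r), p.gcdB (q.gcd r) * q.gcdA r, p.gcdB (q.gcd r) * q.gcdB r,
      by linear_combination -hp - p.gcdB (q.gcd r) * hqr⟩
  · rintro ⟨x, y, z, h⟩
    have hp : (gcd3 p q r : ℤ) ∣ p := Int.natCast_dvd.mpr (Nat.gcd_dvd_left _ _)
    have hq : (gcd3 p q r : ℤ) ∣ q :=
      Int.natCast_dvd.mpr ((Nat.gcd_dvd_right _ _).trans (Nat.gcd_dvd_left _ _))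
    have hr : (gcd3 p q r : ℤ) ∣ r :=
      Int.natCast_dvd.mpr ((Nat.gcd_dvd_right _ _).trans (Nat.gcd_dvd_right _ _))
    have h1 : (gcd3 p q r : ℤ) ∣ 1 :=
      h ▸ dvd_add (dvd_add (hp.mul_left x) (hq.mul_left y)) (hr.mul_left z)
    exact Nat.dvd_one.mp (Int.natCast_dvd.mp h1)

theorem AddSubgroup.mem_of_zsmul_mem_of_gcd3_eq_one {G : Type*} [AddCommGroup G]
    {H : AddSubgroup G} {p q r : ℤ} (h : gcd3 p q r = 1) {g : G}
    (hp : p • g ∈ H) (hq : q • g ∈ H) (hr : r • g ∈ H) : g ∈ H := by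
  obtain ⟨x, y, z, hxyz⟩ := (gcd3_eq_one_iff p q r).mp h
  have : g = x • p • g + y • q • g + z • r • g := by
    simp only [smul_smul, ← add_smul, hxyz, one_smul]
  rw [this]
  exact add_mem (add_mem (zsmul_mem hp x) (zsmul_mem hq y)) (zsmul_mem hr z)

theorem AddSubgroup.mem_closure_triple {G : Type*} [AddCommGroup G] {x y z w : G} :
    w ∈ closure ({x, y, z} : Set G) ↔ ∃ l m n : ℤ, l • x + m • y + n • z = w := by
  rw [← Set.singleton_union, closure_union, mem_sup]
  simp only [mem_closure_singleton, mem_closure_pair, exists_exists_eq_and]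
  constructor
  · rintro ⟨l, _, ⟨m, n, rfl⟩, rfl⟩
    exact ⟨l, m, n, add_assoc _ _ _⟩
  · rintro ⟨l, m, n, rfl⟩
    exact ⟨l, _, ⟨m, n, rfl⟩, (add_assoc _ _ _).symm⟩

theorem Int.prod_addSubgroup_eq_top_iff {H : AddSubgroup (ℤ × ℤ)} :
    H = ⊤ ↔ (1, 0) ∈ H ∧ (0, 1) ∈ H := by
  refine ⟨fun h => h ▸ ⟨trivial, trivial⟩, fun ⟨h₁, h₂⟩ => (AddSubgroup.eq_top_iff' H).mpr ?_⟩
  rintro ⟨x, y⟩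
  have : ((x, y) : ℤ × ℤ) = x • (1, 0) + y • (0, 1) := by simp
  exact this ▸ add_mem (zsmul_mem h₁ x) (zsmul_mem h₂ y)

section

variable {a b c d : ℤ}

theorem gcd3_eq_one_of_closure_eq_top
    (h : AddSubgroup.closure ({(a, 0), (0, b), (c, d)} : Set (ℤ × ℤ)) = ⊤) :
    gcd3 (a * b) (a * d) (b * c) = 1 := by
  rw [Int.prod_addSubgroup_eq_top_iff, AddSubgroup.mem_closure_triple,
    AddSubgroup.mem_closure_triple] at h
  obtain ⟨⟨l, m, n, h₁⟩, ⟨l', m', n', h₂⟩⟩ := h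
  have e₁ : l * a + n * c = 1 := by simpa using congrArg Prod.fst h₁
  have e₂ : l' * a + n' * c = 0 := by simpa using congrArg Prod.fst h₂
  have e₃ : m' * b + n' * d = 1 := by simpa using congrArg Prod.snd h₂
  refine (gcd3_eq_one_iff _ _ _).mpr ⟨l * m' - l' * m, l * n' - l' * n, n * m' - n' * m, ?_⟩
  linear_combination (m' * b + n' * d) * e₁ + e₃ - (m * b + n * d) * e₂

theorem closure_eq_top_of_gcd3_eq_one (h : gcd3 (a * b) (a * d) (b * c) = 1) :
    AddSubgroup.closure ({(a, 0), (0, b), (c, d)} : Set (ℤ × ℤ)) = ⊤ := by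
  set L := AddSubgroup.closure ({(a, 0), (0, b), (c, d)} : Set (ℤ × ℤ))
  have hu : (a, 0) ∈ L := AddSubgroup.subset_closure (by simp)
  have hv : (0, b) ∈ L := AddSubgroup.subset_closure (by simp)
  have hw : (c, d) ∈ L := AddSubgroup.subset_closure (by simp)
  refine Int.prod_addSubgroup_eq_top_iff.mpr ⟨?_, ?_⟩ <;>
    refine AddSubgroup.mem_of_zsmul_mem_of_gcd3_eq_one h ?_ ?_ ?_
  · convert zsmul_mem hu b using 1; ext <;> simp [mul_comm]
  · convert zsmul_mem hu d using 1; ext <;> simp [mul_comm]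
  · convert sub_mem (zsmul_mem hw b) (zsmul_mem hv d) using 1; ext <;> simp [mul_comm]
  · convert zsmul_mem hv a using 1; ext <;> simp
  · convert sub_mem (zsmul_mem hw a) (zsmul_mem hu c) using 1; ext <;> simp [mul_comm]
  · convert zsmul_mem hv c using 1; ext <;> simp [mul_comm]

theorem gcd3_mul_eq_one_iff :
    gcd3 (a * b) (a * d) (b * c) = 1 ↔ Int.gcd a b = 1 ∧ Int.gcd a c = 1 ∧ Int.gcd b d = 1 := by
  constructor
  · intro h
    have eq_one {k : ℕ} (hk : k ∣ gcd3 (a * b) (a * d) (b * c)) : k = 1 := Nat.dvd_one.mp (h ▸ hk)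
    exact ⟨eq_one (dvd_gcd3 ((Int.gcd_dvd_left a b).mul_right b)
        ((Int.gcd_dvd_left a b).mul_right d) ((Int.gcd_dvd_right a b).mul_right c)),
      eq_one (dvd_gcd3 ((Int.gcd_dvd_left a c).mul_right b)
        ((Int.gcd_dvd_left a c).mul_right d) ((Int.gcd_dvd_right a c).mul_left b)),
      eq_one (dvd_gcd3 ((Int.gcd_dvd_left b d).mul_left a)
        ((Int.gcd_dvd_right b d).mul_left a) ((Int.gcd_dvd_left b d).mul_right c))⟩
  · rintro ⟨hab, hac, hbd⟩
    obtain ⟨u, v, h₁⟩ := Int.isCoprime_iff_gcd_eq_one.mpr hab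
    obtain ⟨s, t, h₂⟩ := Int.isCoprime_iff_gcd_eq_one.mpr hac
    obtain ⟨p, q, h₃⟩ := Int.isCoprime_iff_gcd_eq_one.mpr hbd
    refine (gcd3_eq_one_iff _ _ _).mpr ⟨u * s * p * a + v * s * p * b,
      u * s * q * a + u * t * q * c + v * s * q * b, u * t * p * a + v * t * p * b + v * t * q * d, ?_⟩
    linear_combination (s * a + t * c) * (p * b + q * d) * h₁ + (p * b + q * d) * h₂ + h₃

end

/-- For integers `a,b,c,d`, the following are equivalent:
(a) the subgroup of `ℤ²` generated by `(a,0), (0,b), (c,d)` is all of `ℤ²`;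
(b) `gcd(ab, ad, bc) = 1`;
(c) `gcd(a,b) = gcd(a,c) = gcd(b,d) = 1`. -/
theorem z2_closure_eq_top_iff (a b c d : ℤ) :
    (AddSubgroup.closure ({(a,0), (0,b), (c,d)} : Set (ℤ × ℤ)) = ⊤ ↔
      gcd3 (a * b) (a * d) (b * c) = 1) ∧
    (gcd3 (a * b) (a * d) (b * c) = 1 ↔
      (Int.gcd a b = 1 ∧ Int.gcd a c = 1 ∧ Int.gcd b d = 1)) :=
  ⟨⟨gcd3_eq_one_of_closure_eq_top, closure_eq_top_of_gcd3_eq_one⟩, gcd3_mul_eq_one_iff⟩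
end
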